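/- Assume ε ∈ {1,−1}, ξ ≠ 0, εξ > 0, and let λ* ∈ ℝ satisfy z(λ*)² = 1/(6εξ). Then F(0, 0, λ*) = (0,0,0), D(λ*) = 6ξ ≠ 0, and w_eff(0, 0, λ*) = 1/3; i.e. the point 3b is an equilibrium of the system representing a radiation-dominated universe. -/
import Mathlib


open Polynomial Filter

/-- The factor `D(λ) = 1 − 6εξ(1−6ξ)z(λ)²` coming from the time reparametrization. -/
noncomputable def Dfun (ε ξ : ℝ) (z : ℝ → ℝ) (l : ℝ) : ℝ :=
  1 - 6*ε*ξ*(1-6*ξ)*(z l)^2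

/-- The common bracket
`B(x,y,λ) = −4/3 − 2ξλy²z(λ) + ε(1−6ξ)(1−w_m)x² + 2εξ(1−3w_m)(x+z(λ))² + (1+w_m)(1−y²)`. -/
noncomputable def Bfun (ε ξ wm : ℝ) (z : ℝ → ℝ) (x y l : ℝ) : ℝ :=
  -4/3 - 2*ξ*l*y^2*(z l) + ε*(1-6*ξ)*(1-wm)*x^2
    + 2*ε*ξ*(1-3*wm)*(x + z l)^2 + (1+wm)*(1-y^2)

/-- First component of the vector field:
`f₁ = −(x − (ε/2)λy²)·D(λ) + (3/2)(x + 6ξz(λ))·B(x,y,λ)`. -/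
noncomputable def f1 (ε ξ wm : ℝ) (z : ℝ → ℝ) (x y l : ℝ) : ℝ :=
  -(x - ε/2*l*y^2) * Dfun ε ξ z l + 3/2*(x + 6*ξ*(z l)) * Bfun ε ξ wm z x y l

/-- Second component: `f₂ = y(2 − (1/2)λx)·D(λ) + (3/2)y·B(x,y,λ)`. -/
noncomputable def f2 (ε ξ wm : ℝ) (z : ℝ → ℝ) (x y l : ℝ) : ℝ :=
  y*(2 - 1/2*l*x) * Dfun ε ξ z l + 3/2*y * Bfun ε ξ wm z x y l

/-- Third component: `f₃ = x·D(λ)/z′(λ)`. -/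
noncomputable def f3 (ε ξ : ℝ) (z : ℝ → ℝ) (x y l : ℝ) : ℝ :=
  x * Dfun ε ξ z l / deriv z l

/-- The full vector field `F(x,y,λ) = (f₁,f₂,f₃)` of the reduced cosmological system. -/
noncomputable def Fvec (ε ξ wm : ℝ) (z : ℝ → ℝ) (x y l : ℝ) : ℝ × ℝ × ℝ :=
  (f1 ε ξ wm z x y l, f2 ε ξ wm z x y l, f3 ε ξ z x y l)

/-- The effective equation-of-state parameter `w_eff(x,y,λ)`. -/
noncomputable def weff (ε ξ wm : ℝ) (z : ℝ → ℝ) (x y l : ℝ) : ℝ :=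
  (Dfun ε ξ z l)⁻¹ *
    (-1 + ε*(1-6*ξ)*(1-wm)*x^2 + 2*ε*ξ*(1-3*wm)*(x + z l)^2
      + (1+wm)*(1-y^2) - 2*ε*ξ*(1-6*ξ)*(z l)^2 - 2*ξ*l*y^2*(z l))

/-- The Jacobian matrix `J_{ij} = ∂f_i/∂(j-th variable)` of `F` at the point `(x,y,λ)`. -/
noncomputable def Jmat (ε ξ wm : ℝ) (z : ℝ → ℝ) (x y l : ℝ) :
    Matrix (Fin 3) (Fin 3) ℝ :=
  Matrix.of
    ![![deriv (fun t => f1 ε ξ wm z t y l) x,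
        deriv (fun t => f1 ε ξ wm z x t l) y,
        deriv (fun t => f1 ε ξ wm z x y t) l],
      ![deriv (fun t => f2 ε ξ wm z t y l) x,
        deriv (fun t => f2 ε ξ wm z x t l) y,
        deriv (fun t => f2 ε ξ wm z x y t) l],
      ![deriv (fun t => f3 ε ξ z t y l) x,
        deriv (fun t => f3 ε ξ z x t l) y,
        deriv (fun t => f3 ε ξ z x y t) l]]

/-- The point 3b, `x* = y* = 0` with `z(λ*)² = 1/(6εξ)`, is an
equilibrium of the system, with `D(λ*) = 6ξ ≠ 0` and `w_eff = 1/3` (radiation). -/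
theorem radiation3b_point_is_equilibrium (ε ξ wm : ℝ) (z : ℝ → ℝ) (lstar : ℝ)
    (hε : ε = 1 ∨ ε = -1) (hξ0 : ξ ≠ 0) (hsign : 0 < ε*ξ)
    (hz : DifferentiableAt ℝ z lstar) (hz' : deriv z lstar ≠ 0)
    (hl : (z lstar)^2 = 1/(6*ε*ξ)) :
    Fvec ε ξ wm z 0 0 lstar = (0, 0, 0) ∧
    Dfun ε ξ z lstar = 6*ξ ∧ Dfun ε ξ z lstar ≠ 0 ∧
    weff ε ξ wm z 0 0 lstar = 1/3 := by
  have hεξ : ε*ξ ≠ 0 := ne_of_gt hsign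
  have hε2 : ε^2 = 1 := by rcases hε with h | h <;> rw [h] <;> ring
  have h6 : (6:ℝ)*ε*ξ ≠ 0 := by
    intro h; apply hεξ; linarith [mul_assoc (6:ℝ) ε ξ]
  have h1 : 6*ε*ξ*(z lstar)^2 = 1 := by
    rw [hl, mul_one_div, div_self h6]
  have hD : Dfun ε ξ z lstar = 6*ξ := by
    unfold Dfun; linear_combination (-(1-6*ξ))*h1
  have hB : Bfun ε ξ wm z 0 0 lstar = 0 := by
    unfold Bfun; linear_combination ((1-3*wm)/3)*h1
  refine ⟨?_, hD, by rw [hD]; simpa using hξ0, ?_⟩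
  · unfold Fvec f1 f2 f3
    rw [hB]
    norm_num
  · unfold weff
    rw [hD]
    have : (-1 + ε*(1-6*ξ)*(1-wm)*0^2 + 2*ε*ξ*(1-3*wm)*(0 + z lstar)^2
      + (1+wm)*(1-0^2) - 2*ε*ξ*(1-6*ξ)*(z lstar)^2 - 2*ξ*lstar*0^2*(z lstar)) = 2*ξ := by
      linear_combination (2*ξ - wm)*h1
    rw [this]; field_simp; ring
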